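/- arXiv:1901.02058 — 8 statements merged into one kernel-verified Lean document; each statement's English description precedes it below -/
import Mathlib

section
/- Let P* be the I-projection of P onto a closed convex set L of probability distributions on a finite set Y (i.e., P* ∈ L minimizes D(Q||P) over Q ∈ L). Then for all Q ∈ L, D(Q||P) ≥ D(Q||P*) + D(P*||P). -/
/-- I-divergence (Kullback-Leibler divergence) on a finite set. -/
noncomputable def kl {Y : Type*} [Fintype Y] (Q P : Y → ℝ) : ℝ :=
  ∑ y, Q y * Real.log (Q y / P y)

/-!
Along the segment from `P*` to any `Q ∈ L` (which stays in `L` by convexity) the function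
`D(· ‖ P)` is minimal at `P*`, so its one-sided directional derivative there is nonnegative.
That derivative is `∑ (Q - P*) (log (P*/P) + 1)`; the `+ 1` terms cancel because both are
probability vectors, and what is left is exactly `D(Q‖P) - D(Q‖P*) - D(P*‖P)`.
-/

open Real Set

lemma HasLineDerivAt.nonneg_of_forall_le {E : Type*} [AddCommGroup E] [Module ℝ E]
    {f : E → ℝ} {f' : ℝ} {x v : E} (hf : HasLineDerivAt ℝ f f' x v)
    (hle : ∀ t ∈ Ioc (0 : ℝ) 1, f x ≤ f (x + t • v)) : 0 ≤ f' := by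
  refine ge_of_tendsto hf.tendsto_slope_zero_right ?_
  filter_upwards [Ioo_mem_nhdsGT (zero_lt_one' ℝ)] with t ht
  exact smul_nonneg (inv_nonneg.2 ht.1.le) (sub_nonneg.2 (hle t ⟨ht.1, ht.2.le⟩))

lemma hasDerivAt_mul_log_div {p r : ℝ} (hp : p ≠ 0) (hr : r ≠ 0) :
    HasDerivAt (fun x => x * log (x / p)) (log (r / p) + 1) r := by
  have h := (hasDerivAt_id' r).fun_mul (((hasDerivAt_id' r).div_const p).log (div_ne_zero hr hp))
  refine h.congr_deriv ?_
  field_simp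

section KL

variable {Y : Type*} [Fintype Y]

lemma hasLineDerivAt_kl {P R : Y → ℝ} (hP : ∀ y, P y ≠ 0) (hR : ∀ y, R y ≠ 0) (d : Y → ℝ) :
    HasLineDerivAt ℝ (fun Q => kl Q P) (∑ y, d y * (log (R y / P y) + 1)) R d := by
  unfold HasLineDerivAt kl
  refine HasDerivAt.fun_sum fun y _ => ?_
  have hline : HasDerivAt (fun t : ℝ => R y + t * d y) (d y) 0 := by
    simpa using (hasDerivAt_mul_const (d y)).const_add (R y)
  have hcomp := (hasDerivAt_mul_log_div (hP y) (hR y)).comp_of_eq 0 hline (by simp)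
  rw [mul_comm]
  exact hcomp

lemma kl_sub_kl_add_kl {P R : Y → ℝ} (hP : ∀ y, P y ≠ 0) (hR : ∀ y, R y ≠ 0) (Q : Y → ℝ) :
    kl Q P - (kl Q R + kl R P) = ∑ y, (Q y - R y) * log (R y / P y) := by
  unfold kl
  rw [← Finset.sum_add_distrib, ← Finset.sum_sub_distrib]
  refine Finset.sum_congr rfl fun y _ => ?_
  rcases eq_or_ne (Q y) 0 with hQ | hQ
  · simp [hQ]
  · have hsplit : Q y / P y = Q y / R y * (R y / P y) := by field_simp [hR y]
    rw [hsplit, log_mul (div_ne_zero hQ (hR y)) (div_ne_zero (hR y) (hP y))]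
    ring

lemma IsMinOn.sum_sub_mul_log_div_add_one_nonneg {P R Q : Y → ℝ} {L : Set (Y → ℝ)}
    (hP : ∀ y, P y ≠ 0) (hR : ∀ y, R y ≠ 0) (hmin : IsMinOn (fun Q => kl Q P) L R)
    (hL : Convex ℝ L) (hRL : R ∈ L) (hQL : Q ∈ L) :
    0 ≤ ∑ y, (Q y - R y) * (log (R y / P y) + 1) :=
  (hasLineDerivAt_kl hP hR (Q - R)).nonneg_of_forall_le fun _ ht =>
    hmin (hL.add_smul_sub_mem hRL hQL (Ioc_subset_Icc_self ht))

end KL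

theorem stmt1_general {Y : Type*} [Fintype Y] (P : Y → ℝ)
    (hP : ∀ y, 0 < P y)
    (L : Set (Y → ℝ))
    (hLpos : ∀ Q ∈ L, (∀ y, 0 < Q y) ∧ ∑ y, Q y = 1)
    (hLconvex : Convex ℝ L)
    (Pstar : Y → ℝ) (hPstar : Pstar ∈ L)
    (hmin : ∀ Q ∈ L, kl Pstar P ≤ kl Q P) :
    ∀ Q ∈ L, kl Q P ≥ kl Q Pstar + kl Pstar P := by
  intro Q hQ
  have hP0 : ∀ y, P y ≠ 0 := fun y => (hP y).ne'
  have hPstar0 : ∀ y, Pstar y ≠ 0 := fun y => ((hLpos Pstar hPstar).1 y).ne'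
  have hmass : ∑ y, (Q y - Pstar y) = 0 := by
    rw [Finset.sum_sub_distrib, (hLpos Q hQ).2, (hLpos Pstar hPstar).2, sub_self]
  have hopt := IsMinOn.sum_sub_mul_log_div_add_one_nonneg hP0 hPstar0 (isMinOn_iff.2 hmin)
    hLconvex hPstar hQ
  simp only [mul_add_one, Finset.sum_add_distrib, hmass, add_zero] at hopt
  have hpyth := kl_sub_kl_add_kl hP0 hPstar0 Q
  linarith

theorem stmt1 {Y : Type*} [Fintype Y] (P : Y → ℝ)
    (hP : ∀ y, 0 < P y) (hPs : ∑ y, P y = 1)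
    (L : Set (Y → ℝ))
    (hLpos : ∀ Q ∈ L, (∀ y, 0 < Q y) ∧ ∑ y, Q y = 1)
    (hLclosed : IsClosed L) (hLconvex : Convex ℝ L)
    (Pstar : Y → ℝ) (hPstar : Pstar ∈ L)
    (hmin : ∀ Q ∈ L, kl Pstar P ≤ kl Q P) :
    ∀ Q ∈ L, kl Q P ≥ kl Q Pstar + kl Pstar P :=
  stmt1_general P hP L hLpos hLconvex Pstar hPstar hmin
end

section
/- One-way proportional covariation minimizes the I-divergence: with P = (θ_1,θ_2,θ_3) ∈ Δ_2 strictly positive and θ̃_1 ∈ (0,1), among all strictly positive Q ∈ Δ_2 with first coordinate equal to θ̃_1, the I-divergence D(Q||P) is uniquely minimized at Q = (θ̃_1, θ_2(1−θ̃_1)/(1−θ_1), θ_3(1−θ̃_1)/(1−θ_1)). -/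
open Real
open InformationTheory (klFun klFun_apply klFun_nonneg klFun_eq_zero_iff)

section Gibbs

variable {Y : Type*} [Fintype Y] {Q P : Y → ℝ} {c : ℝ}

lemma mul_log_div_eq_add_klFun {q p : ℝ} (hp : 0 < p) (hc : 0 < c) :
    q * log (q / p) = c * p * log (c * p / p) + c * p * klFun (q / (c * p)) +
      (q - c * p) * (1 + log c) := by
  have hcp : c * p ≠ 0 := by positivity
  rw [klFun_apply, mul_div_cancel_right₀ _ hp.ne']
  rcases eq_or_ne q 0 with rfl | hq
  · field_simp
    ring
  · have hlog : log (q / p) = log (q / (c * p)) + log c := by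
      rw [← log_mul (div_ne_zero hq hcp) hc.ne']
      field_simp
    rw [hlog]
    field_simp
    ring

lemma mul_klFun_div_nonneg {q p : ℝ} (hq : 0 ≤ q) (hp : 0 < p) (hc : 0 < c) :
    0 ≤ c * p * klFun (q / (c * p)) :=
  mul_nonneg (by positivity) (klFun_nonneg (by positivity))

lemma kl_eq_kl_smul_add_sum_klFun (hP : ∀ y, 0 < P y) (hc : 0 < c)
    (hmass : ∑ y, Q y = c * ∑ y, P y) :
    kl Q P = kl (c • P) P + ∑ y, c * P y * klFun (Q y / (c * P y)) := by
  have hcancel : ∑ y, (Q y - c * P y) * (1 + log c) = 0 := by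
    rw [← Finset.sum_mul, Finset.sum_sub_distrib, ← Finset.mul_sum, hmass, sub_self, zero_mul]
  simp only [kl, Pi.smul_apply, smul_eq_mul]
  rw [Finset.sum_congr rfl fun y _ => mul_log_div_eq_add_klFun (q := Q y) (hP y) hc,
    Finset.sum_add_distrib, Finset.sum_add_distrib, hcancel, add_zero]

lemma kl_smul_le_kl (hP : ∀ y, 0 < P y) (hQ : ∀ y, 0 ≤ Q y) (hc : 0 < c)
    (hmass : ∑ y, Q y = c * ∑ y, P y) :
    kl (c • P) P ≤ kl Q P := by
  rw [kl_eq_kl_smul_add_sum_klFun hP hc hmass]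
  exact le_add_of_nonneg_right (Finset.sum_nonneg fun y _ => mul_klFun_div_nonneg (hQ y) (hP y) hc)

lemma eq_smul_of_kl_eq_kl_smul (hP : ∀ y, 0 < P y) (hQ : ∀ y, 0 ≤ Q y) (hc : 0 < c)
    (hmass : ∑ y, Q y = c * ∑ y, P y) (heq : kl Q P = kl (c • P) P) :
    Q = c • P := by
  rw [kl_eq_kl_smul_add_sum_klFun hP hc hmass, add_eq_left,
    Finset.sum_eq_zero_iff_of_nonneg fun y _ => mul_klFun_div_nonneg (hQ y) (hP y) hc] at heq
  funext y
  have hcp : 0 < c * P y := by positivity [hP y]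
  have hzero := heq y (Finset.mem_univ y)
  rw [mul_eq_zero, klFun_eq_zero_iff (div_nonneg (hQ y) hcp.le), div_eq_one_iff_eq hcp.ne'] at hzero
  exact hzero.resolve_left hcp.ne'

end Gibbs

lemma kl_vecCons {n : ℕ} (a b : ℝ) (Q P : Fin n → ℝ) :
    kl (Matrix.vecCons a Q) (Matrix.vecCons b P) = a * log (a / b) + kl Q P := by
  simp [kl, Fin.sum_univ_succ]

theorem stmt8_general (θ1 θ2 θ3 : ℝ) (hθ2 : 0 < θ2) (hθ3 : 0 < θ3)
    (hθs : θ1 + θ2 + θ3 = 1)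
    (t : ℝ) :
    ∀ q2 q3 : ℝ, 0 < q2 → 0 < q3 → t + q2 + q3 = 1 →
      (kl ![t, θ2 * (1 - t) / (1 - θ1), θ3 * (1 - t) / (1 - θ1)] ![θ1, θ2, θ3] ≤
          kl ![t, q2, q3] ![θ1, θ2, θ3]) ∧
        (kl ![t, q2, q3] ![θ1, θ2, θ3] =
            kl ![t, θ2 * (1 - t) / (1 - θ1), θ3 * (1 - t) / (1 - θ1)] ![θ1, θ2, θ3] →
          q2 = θ2 * (1 - t) / (1 - θ1) ∧ q3 = θ3 * (1 - t) / (1 - θ1)) := by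
  intro q2 q3 hq2 hq3 hsum
  have hθ1 : 0 < 1 - θ1 := by linarith
  set c := (1 - t) / (1 - θ1)
  have hc : 0 < c := div_pos (by linarith) hθ1
  have hmin : ![θ2 * (1 - t) / (1 - θ1), θ3 * (1 - t) / (1 - θ1)] = c • ![θ2, θ3] := by
    ext i; fin_cases i <;> simp [c] <;> ring
  have hP : ∀ i, 0 < ![θ2, θ3] i := by intro i; fin_cases i <;> simpa
  have hQ : ∀ i, 0 ≤ ![q2, q3] i := by intro i; fin_cases i <;> simp [hq2.le, hq3.le]
  have hmass : ∑ i, ![q2, q3] i = c * ∑ i, ![θ2, θ3] i := by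
    simp only [Fin.sum_univ_two, Matrix.cons_val_zero, Matrix.cons_val_one]
    rw [show q2 + q3 = 1 - t by linarith, show θ2 + θ3 = 1 - θ1 by linarith,
      div_mul_cancel₀ _ hθ1.ne']
  rw [kl_vecCons t θ1, kl_vecCons t θ1, hmin]
  refine ⟨add_le_add_right (kl_smul_le_kl hP hQ hc hmass) _, fun heq => ?_⟩
  have hQeq := eq_smul_of_kl_eq_kl_smul hP hQ hc hmass (add_left_cancel heq)
  rw [← hmin] at hQeq
  exact ⟨congr_fun hQeq 0, congr_fun hQeq 1⟩

theorem stmt8 (θ1 θ2 θ3 : ℝ) (hθ1 : 0 < θ1) (hθ2 : 0 < θ2) (hθ3 : 0 < θ3)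
    (hθs : θ1 + θ2 + θ3 = 1)
    (t : ℝ) (ht0 : 0 < t) (ht1 : t < 1) :
    ∀ q2 q3 : ℝ, 0 < q2 → 0 < q3 → t + q2 + q3 = 1 →
      (kl ![t, θ2 * (1 - t) / (1 - θ1), θ3 * (1 - t) / (1 - θ1)] ![θ1, θ2, θ3] ≤
          kl ![t, q2, q3] ![θ1, θ2, θ3]) ∧
        (kl ![t, q2, q3] ![θ1, θ2, θ3] =
            kl ![t, θ2 * (1 - t) / (1 - θ1), θ3 * (1 - t) / (1 - θ1)] ![θ1, θ2, θ3] →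
          q2 = θ2 * (1 - t) / (1 - θ1) ∧ q3 = θ3 * (1 - t) / (1 - θ1)) :=
  stmt8_general θ1 θ2 θ3 hθ2 hθ3 hθs t
end

section
/- General one-way proportional covariation optimality: for a strictly positive P ∈ Δ_{n−1} (n ≥ 2), an index v, and a fixed value p̃ ∈ (0,1), among all strictly positive Q ∈ Δ_{n−1} with Q_v = p̃, the I-divergence D(Q||P) is minimized exactly at Q given by Q_v = p̃ and Q_j = P_j(1−p̃)/(1−P_v) for j ≠ v. -/
open Real Finset InformationTheory

lemma mul_log_div_eq_mul_klFun_add {a b : ℝ} (hb : b ≠ 0) :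
    a * log (a / b) = b * klFun (a / b) + (a - b) := by
  rw [klFun_apply]
  field_simp
  ring

section

variable {Y : Type*} [Fintype Y]

lemma kl_eq_sum_mul_klFun {Q R : Y → ℝ} (hR : ∀ y, R y ≠ 0) (hsum : ∑ y, Q y = ∑ y, R y) :
    kl Q R = ∑ y, R y * klFun (Q y / R y) := by
  have hdiff : ∑ y, (Q y - R y) = 0 := by rw [sum_sub_distrib, hsum, sub_self]
  simp only [kl, mul_log_div_eq_mul_klFun_add (hR _), sum_add_distrib, hdiff, add_zero]

lemma kl_nonneg {Q R : Y → ℝ} (hQ : ∀ y, 0 ≤ Q y) (hR : ∀ y, 0 < R y)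
    (hsum : ∑ y, Q y = ∑ y, R y) : 0 ≤ kl Q R := by
  rw [kl_eq_sum_mul_klFun (fun y => (hR y).ne') hsum]
  exact sum_nonneg fun y _ => mul_nonneg (hR y).le (klFun_nonneg (div_nonneg (hQ y) (hR y).le))

lemma eq_of_kl_eq_zero {Q R : Y → ℝ} (hQ : ∀ y, 0 ≤ Q y) (hR : ∀ y, 0 < R y)
    (hsum : ∑ y, Q y = ∑ y, R y) (h : kl Q R = 0) : Q = R := by
  have hterm_nonneg : ∀ y ∈ univ, 0 ≤ R y * klFun (Q y / R y) := fun y _ =>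
    mul_nonneg (hR y).le (klFun_nonneg (div_nonneg (hQ y) (hR y).le))
  rw [kl_eq_sum_mul_klFun (fun y => (hR y).ne') hsum, sum_eq_zero_iff_of_nonneg hterm_nonneg] at h
  funext y
  have hy := h y (mem_univ y)
  rwa [mul_eq_zero, or_iff_right (hR y).ne', klFun_eq_zero_iff (div_nonneg (hQ y) (hR y).le),
    div_eq_one_iff_eq (hR y).ne'] at hy

lemma kl_eq_kl_add_sum_mul_log_div {Q R P : Y → ℝ} (hR : ∀ y, R y ≠ 0) (hP : ∀ y, P y ≠ 0) :
    kl Q P = kl Q R + ∑ y, Q y * log (R y / P y) := by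
  rw [kl, kl, ← sum_add_distrib]
  refine sum_congr rfl fun y _ => ?_
  rcases eq_or_ne (Q y) 0 with hQ | hQ
  · simp [hQ]
  · rw [← mul_add, ← log_mul (div_ne_zero hQ (hR y)) (div_ne_zero (hR y) (hP y)),
      div_mul_div_cancel₀ (hR y)]

lemma sum_mul_eq_sum_mul_of_eq_off {Q R f : Y → ℝ} {v : Y} {k : ℝ} (hf : ∀ y ≠ v, f y = k)
    (hv : Q v = R v) (hsum : ∑ y, Q y = ∑ y, R y) :
    ∑ y, Q y * f y = ∑ y, R y * f y := by
  have hsplit : ∀ S : Y → ℝ, ∑ y, S y * f y = S v * (f v - k) + k * ∑ y, S y := by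
    intro S
    have hsingle : ∑ y, S y * (f y - k) = S v * (f v - k) :=
      sum_eq_single v (fun y _ hy => by rw [hf y hy, sub_self, mul_zero]) (by simp)
    rw [← hsingle, mul_sum, ← sum_add_distrib]
    exact sum_congr rfl fun y _ => by ring
  rw [hsplit, hsplit, hv, hsum]

lemma lt_one_of_sum_eq_one {P : Y → ℝ} (hP : ∀ y, 0 < P y) (hPs : ∑ y, P y = 1) {v w : Y}
    (hw : w ≠ v) : P v < 1 :=
  hPs ▸ single_lt_sum hw (mem_univ v) (mem_univ w) (hP w) fun y _ _ => (hP y).le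

end

section

variable {Y : Type*} [DecidableEq Y]

noncomputable def proportionalUpdate (P : Y → ℝ) (v : Y) (p : ℝ) : Y → ℝ :=
  fun j => if j = v then p else P j * (1 - p) / (1 - P v)

variable {P : Y → ℝ} {v : Y} {p : ℝ}

lemma proportionalUpdate_pos (hP : ∀ y, 0 < P y) (hPv : P v < 1) (hp0 : 0 < p) (hp1 : p < 1)
    (j : Y) : 0 < proportionalUpdate P v p j := by
  unfold proportionalUpdate
  split_ifs
  · exact hp0
  · exact div_pos (mul_pos (hP j) (sub_pos.2 hp1)) (sub_pos.2 hPv)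

lemma sum_proportionalUpdate [Fintype Y] (hPs : ∑ y, P y = 1) (hPv : P v ≠ 1) :
    ∑ j, proportionalUpdate P v p j = 1 := by
  have hrest : ∑ j ∈ univ.erase v, P j = 1 - P v := by
    rw [← hPs, ← sum_erase_add univ P (mem_univ v), add_sub_cancel_right]
  unfold proportionalUpdate
  rw [← sum_erase_add univ _ (mem_univ v),
    sum_congr rfl fun j hj => if_neg (ne_of_mem_erase hj), ← sum_div, ← sum_mul, hrest,
    if_pos rfl, mul_div_cancel_left₀ _ (sub_ne_zero.2 (Ne.symm hPv))]
  ring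

lemma log_proportionalUpdate_div_of_ne (hP : ∀ y, P y ≠ 0) {j : Y} (hj : j ≠ v) :
    log (proportionalUpdate P v p j / P j) = log ((1 - p) / (1 - P v)) := by
  rw [proportionalUpdate, if_neg hj, mul_div_assoc, mul_div_cancel_left₀ _ (hP j)]

lemma kl_eq_kl_proportionalUpdate_add [Fintype Y] {Q : Y → ℝ} (hP : ∀ y, 0 < P y)
    (hPs : ∑ y, P y = 1) (hPv : P v < 1) (hp0 : 0 < p) (hp1 : p < 1) (hQs : ∑ y, Q y = 1)
    (hQv : Q v = p) :
    kl Q P = kl Q (proportionalUpdate P v p) + kl (proportionalUpdate P v p) P := by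
  have hP' : ∀ y, P y ≠ 0 := fun y => (hP y).ne'
  rw [kl_eq_kl_add_sum_mul_log_div (fun j => (proportionalUpdate_pos hP hPv hp0 hp1 j).ne') hP']
  congr 1
  refine sum_mul_eq_sum_mul_of_eq_off (fun j hj => log_proportionalUpdate_div_of_ne hP' hj) ?_ ?_
  · rw [hQv, proportionalUpdate, if_pos rfl]
  · rw [hQs, sum_proportionalUpdate hPs hPv.ne]

end

theorem stmt9 {n : ℕ} (hn : 2 ≤ n)
    (P : Fin n → ℝ) (hP : ∀ j, 0 < P j) (hPs : ∑ j, P j = 1)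
    (v : Fin n) (p : ℝ) (hp0 : 0 < p) (hp1 : p < 1)
    (Qstar : Fin n → ℝ)
    (hQstar : Qstar = fun j => if j = v then p else P j * (1 - p) / (1 - P v)) :
    ∀ Q : Fin n → ℝ, (∀ j, 0 < Q j) → (∑ j, Q j = 1) → Q v = p →
      kl Qstar P ≤ kl Q P ∧ (kl Q P = kl Qstar P → Q = Qstar) := by
  intro Q hQ hQs hQv
  have hQstar' : Qstar = proportionalUpdate P v p := hQstar
  subst hQstar'
  obtain ⟨w, hw⟩ := Fintype.exists_ne_of_one_lt_card (by simp; omega) v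
  have hPv := lt_one_of_sum_eq_one hP hPs hw
  have hQstar_pos := proportionalUpdate_pos hP hPv hp0 hp1
  have hsum : ∑ j, Q j = ∑ j, proportionalUpdate P v p j := by
    rw [hQs, sum_proportionalUpdate hPs hPv.ne]
  have hpyth := kl_eq_kl_proportionalUpdate_add hP hPs hPv hp0 hp1 hQs hQv
  have hgibbs := kl_nonneg (fun j => (hQ j).le) hQstar_pos hsum
  exact ⟨by linarith,
    fun heq => eq_of_kl_eq_zero (fun j => (hQ j).le) hQstar_pos hsum (by linarith)⟩
end

section
/- For the product model P(i,j) = θ_i ψ_j on [3]×[3] with θ, ψ ∈ Δ_2 strictly positive, fix θ̃_1, ψ̃_1 ∈ (0,1) and define P̃(i,j) = θ̃_i ψ̃_j where θ̃, ψ̃ are the proportional covariations of θ, ψ respectively. Then for every product distribution Q(i,j) = θ̄_i ψ̄_j with θ̄, ψ̄ ∈ Δ_2 strictly positive, θ̄_1 = θ̃_1 and ψ̄_1 = ψ̃_1, the Pythagorean identity D(Q||P) = D(Q||P̃) + D(P̃||P) holds. -/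
lemma kl_prod3 (a b c d : Fin 3 → ℝ) (ha : ∀ i, 0 < a i) (hb : ∀ i, 0 < b i)
    (hc : ∀ i, 0 < c i) (hd : ∀ i, 0 < d i)
    (has : ∑ i, a i = 1) (hbs : ∑ i, b i = 1) :
    kl (fun p : Fin 3 × Fin 3 => a p.1 * b p.2) (fun p : Fin 3 × Fin 3 => c p.1 * d p.2)
      = kl a c + kl b d := by
  have hlog : ∀ i j : Fin 3, Real.log (a i * b j / (c i * d j))
      = Real.log (a i / c i) + Real.log (b j / d j) := by
    intro i j
    rw [← div_mul_div_comm, Real.log_mul (ne_of_gt (div_pos (ha i) (hc i)))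
      (ne_of_gt (div_pos (hb j) (hd j)))]
  simp only [kl, Fintype.sum_prod_type, hlog]
  simp only [Fin.sum_univ_three] at *
  linear_combination (a 0 * Real.log (a 0 / c 0) + a 1 * Real.log (a 1 / c 1)
      + a 2 * Real.log (a 2 / c 2)) * hbs
    + (b 0 * Real.log (b 0 / d 0) + b 1 * Real.log (b 1 / d 1)
      + b 2 * Real.log (b 2 / d 2)) * has

lemma pyth3 (θ θb : Fin 3 → ℝ) (t1 : ℝ) (hθ : ∀ i, 0 < θ i) (hθs : ∑ i, θ i = 1)
    (ht1 : t1 < 1) (hθb : ∀ i, 0 < θb i) (hθbs : ∑ i, θb i = 1) (hb0 : θb 0 = t1) :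
    kl θb θ = kl θb (fun i => if i = 0 then t1 else θ i * (1 - t1) / (1 - θ 0))
      + kl (fun i => if i = 0 then t1 else θ i * (1 - t1) / (1 - θ 0)) θ := by
  subst hb0
  have h01 : θ 0 < 1 := by
    simp only [Fin.sum_univ_three] at hθs
    have := hθ 1; have := hθ 2; linarith
  have ht1' : 0 < 1 - θb 0 := by linarith
  have h01' : (0:ℝ) < 1 - θ 0 := by linarith
  have h1ne : (1:Fin 3) ≠ 0 := by decide
  have h2ne : (2:Fin 3) ≠ 0 := by decide
  simp only [kl, Fin.sum_univ_three, if_pos rfl, if_true, if_neg h1ne, if_neg h2ne]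
  have hma : ∀ i : Fin 3, θ i * (1 - θb 0) / (1 - θ 0) = θ i * ((1 - θb 0) / (1 - θ 0)) := by
    intro i; ring
  have hu : 0 < (1 - θb 0) / (1 - θ 0) := div_pos ht1' h01'
  obtain ⟨u, hudef⟩ : ∃ u : ℝ, u = (1 - θb 0) / (1 - θ 0) := ⟨_, rfl⟩
  rw [← hudef] at hu hma
  rw [hma 1, hma 2]
  have e1 : ∀ i, Real.log (θb i / (θ i * u)) = Real.log (θb i / θ i) - Real.log u := by
    intro i
    rw [← div_div, Real.log_div (ne_of_gt (div_pos (hθb i) (hθ i))) (ne_of_gt hu)]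
  have e2 : ∀ i, Real.log (θ i * u / θ i) = Real.log u := by
    intro i
    rw [mul_comm, mul_div_assoc, div_self (ne_of_gt (hθ i)), mul_one]
  have e3 : Real.log (θb 0 / θb 0) = 0 := by
    rw [div_self (ne_of_gt (hθb 0)), Real.log_one]
  rw [e1 1, e1 2, e2 1, e2 2, e3]
  have key : (θ 1 + θ 2) * u = θb 1 + θb 2 := by
    have h1 : θ 1 + θ 2 = 1 - θ 0 := by
      simp only [Fin.sum_univ_three] at hθs; linarith
    have h2 : θb 1 + θb 2 = 1 - θb 0 := by
      simp only [Fin.sum_univ_three] at hθbs; linarith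
    rw [h1, h2, hudef]
    field_simp
  linear_combination (-Real.log u) * key

lemma cov_pos (θ : Fin 3 → ℝ) (t1 : ℝ) (hθ : ∀ i, 0 < θ i) (hθs : ∑ i, θ i = 1)
    (ht0 : 0 < t1) (ht1 : t1 < 1) :
    ∀ i, 0 < (fun i : Fin 3 => if i = 0 then t1 else θ i * (1 - t1) / (1 - θ 0)) i := by
  have h01 : θ 0 < 1 := by
    simp only [Fin.sum_univ_three] at hθs
    have := hθ 1; have := hθ 2; linarith
  intro i
  by_cases h : i = 0
  · simp only [if_pos h]
    exact ht0
  · simp only [if_neg h]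
    exact div_pos (mul_pos (hθ i) (by linarith)) (by linarith)

lemma cov_sum (θ : Fin 3 → ℝ) (t1 : ℝ) (hθ : ∀ i, 0 < θ i) (hθs : ∑ i, θ i = 1)
    (ht1 : t1 < 1) :
    ∑ i, (fun i : Fin 3 => if i = 0 then t1 else θ i * (1 - t1) / (1 - θ 0)) i = 1 := by
  have h01 : θ 0 < 1 := by
    simp only [Fin.sum_univ_three] at hθs
    have := hθ 1; have := hθ 2; linarith
  have h1ne : (1:Fin 3) ≠ 0 := by decide
  have h2ne : (2:Fin 3) ≠ 0 := by decide
  simp only [Fin.sum_univ_three, if_pos rfl, if_true, if_neg h1ne, if_neg h2ne]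
  have h1 : θ 1 + θ 2 = 1 - θ 0 := by
    simp only [Fin.sum_univ_three] at hθs; linarith
  have hne : (1:ℝ) - θ 0 ≠ 0 := by linarith
  field_simp
  linear_combination (1 - t1) * h1

theorem stmt10 (θ ψ : Fin 3 → ℝ)
    (hθ : ∀ i, 0 < θ i) (hθs : ∑ i, θ i = 1)
    (hψ : ∀ i, 0 < ψ i) (hψs : ∑ i, ψ i = 1)
    (t1 s1 : ℝ) (ht0 : 0 < t1) (ht1 : t1 < 1) (hs0 : 0 < s1) (hs1 : s1 < 1)
    (θt ψt : Fin 3 → ℝ)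
    (hθt : θt = fun i => if i = 0 then t1 else θ i * (1 - t1) / (1 - θ 0))
    (hψt : ψt = fun i => if i = 0 then s1 else ψ i * (1 - s1) / (1 - ψ 0)) :
    ∀ θb ψb : Fin 3 → ℝ,
      (∀ i, 0 < θb i) → (∑ i, θb i = 1) → (∀ i, 0 < ψb i) → (∑ i, ψb i = 1) →
      θb 0 = t1 → ψb 0 = s1 →
      kl (fun p : Fin 3 × Fin 3 => θb p.1 * ψb p.2)
          (fun p : Fin 3 × Fin 3 => θ p.1 * ψ p.2) =
        kl (fun p : Fin 3 × Fin 3 => θb p.1 * ψb p.2)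
            (fun p : Fin 3 × Fin 3 => θt p.1 * ψt p.2) +
          kl (fun p : Fin 3 × Fin 3 => θt p.1 * ψt p.2)
            (fun p : Fin 3 × Fin 3 => θ p.1 * ψ p.2) := by
  intro θb ψb hbp hbs hpp hps hb0 hp0
  subst hθt hψt
  have hθtp := cov_pos θ t1 hθ hθs ht0 ht1
  have hψtp := cov_pos ψ s1 hψ hψs hs0 hs1
  have hθts := cov_sum θ t1 hθ hθs ht1
  have hψts := cov_sum ψ s1 hψ hψs hs1
  rw [kl_prod3 θb ψb θ ψ hbp hpp hθ hψ hbs hps,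
    kl_prod3 θb ψb _ _ hbp hpp hθtp hψtp hbs hps,
    kl_prod3 _ _ θ ψ hθtp hψtp hθ hψ hθts hψts,
    pyth3 θ θb t1 hθ hθs ht1 hbp hbs hb0,
    pyth3 ψ ψb s1 hψ hψs hs1 hpp hps hp0]
  ring
end

section
/- In the staged tree model with atomic probabilities (θ_1ψ_1, θ_1ψ_2, θ_1ψ_3, θ_2, θ_3), varying θ_1 to θ̃_1 and ψ_1 to ψ̃_1 and covarying proportionally (θ̃_j = θ_j(1−θ̃_1)/(1−θ_1), ψ̃_j = ψ_j(1−ψ̃_1)/(1−ψ_1) for j = 2,3) yields the distribution P̃ that satisfies D(Q||P) = D(Q||P̃) + D(P̃||P) for all distributions Q in the model with parameters θ̄, ψ̄ satisfying θ̄_1 = θ̃_1 and ψ̄_1 = ψ̃_1. -/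
/-- The staged tree distribution with atomic probabilities (θ₁ψ₁, θ₁ψ₂, θ₁ψ₃, θ₂, θ₃). -/
noncomputable def stagedTree (θ ψ : Fin 3 → ℝ) : Fin 5 → ℝ :=
  ![θ 0 * ψ 0, θ 0 * ψ 1, θ 0 * ψ 2, θ 1, θ 2]

theorem stmt13 (θ ψ : Fin 3 → ℝ)
    (hθ : ∀ i, 0 < θ i) (hθs : ∑ i, θ i = 1)
    (hψ : ∀ i, 0 < ψ i) (hψs : ∑ i, ψ i = 1)
    (t1 s1 : ℝ) (ht0 : 0 < t1) (ht1 : t1 < 1) (hs0 : 0 < s1) (hs1 : s1 < 1)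
    (θt ψt : Fin 3 → ℝ)
    (hθt : θt = fun i => if i = 0 then t1 else θ i * (1 - t1) / (1 - θ 0))
    (hψt : ψt = fun i => if i = 0 then s1 else ψ i * (1 - s1) / (1 - ψ 0)) :
    ∀ θb ψb : Fin 3 → ℝ,
      (∀ i, 0 < θb i) → (∑ i, θb i = 1) → (∀ i, 0 < ψb i) → (∑ i, ψb i = 1) →
      θb 0 = t1 → ψb 0 = s1 →
      kl (stagedTree θb ψb) (stagedTree θ ψ) =
        kl (stagedTree θb ψb) (stagedTree θt ψt) +
          kl (stagedTree θt ψt) (stagedTree θ ψ) := by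
  intro θb ψb hθb hθbs hψb hψbs hb0 hp0
  subst hθt hψt
  rw [Fin.sum_univ_three] at hθs hψs hθbs hψbs
  have h01 : 0 < θ 0 := hθ 0
  have h02 : 0 < θ 1 := hθ 1
  have h03 : 0 < θ 2 := hθ 2
  have h04 : 0 < ψ 0 := hψ 0
  have h05 : 0 < ψ 1 := hψ 1
  have h06 : 0 < ψ 2 := hψ 2
  have h07 : 0 < θb 1 := hθb 1
  have h08 : 0 < θb 2 := hθb 2
  have h09 : 0 < ψb 1 := hψb 1
  have h10 : 0 < ψb 2 := hψb 2
  have h11 : 0 < 1 - θ 0 := by linarith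
  have h12 : 0 < 1 - ψ 0 := by linarith
  have h13 : 0 < 1 - t1 := by linarith
  have h14 : 0 < 1 - s1 := by linarith
  simp only [kl, stagedTree, Fin.sum_univ_five, Matrix.cons_val_zero, Matrix.cons_val_one,
    Matrix.head_cons, Matrix.cons_val_two, Matrix.tail_cons, Matrix.cons_val_three,
    Matrix.cons_val_four, Matrix.head_fin_const]
  simp only [show ((1:Fin 3) = 0) = False by simp, show ((2:Fin 3) = 0) = False by simp,
    if_true, if_false, ite_true, ite_false]
  rw [hb0, hp0]
  simp (disch := positivity) only [Real.log_div, Real.log_mul]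
  have hθ2 : θ 2 = 1 - θ 0 - θ 1 := by linarith
  have hψ2 : ψ 2 = 1 - ψ 0 - ψ 1 := by linarith
  have hθb2 : θb 2 = 1 - t1 - θb 1 := by rw [hb0] at hθbs; linarith
  have hψb2 : ψb 2 = 1 - s1 - ψb 1 := by rw [hp0] at hψbs; linarith
  rw [hθ2, hψ2, hθb2, hψb2]
  have e1 : (1:ℝ) - θ 0 ≠ 0 := ne_of_gt h11
  have e2 : (1:ℝ) - ψ 0 ≠ 0 := ne_of_gt h12
  field_simp
  ring
end

section
/- In the staged tree model with atomic probabilities (θ_1ψ_1, θ_1ψ_2, θ_1ψ_3, θ_2, θ_3), varying θ_2 to θ̃_2 and ψ_1 to ψ̃_1 and covarying proportionally, the Pythagorean identity D(Q||P) = D(Q||P̃) + D(P̃||P) holds for Q with parameters (θ̄, ψ̄), θ̄_2 = θ̃_2, ψ̄_1 = ψ̃_1, if and only if (θ̄_1 − θ̃_1)·(ψ̃_1 ln(ψ̃_1/ψ_1) + (1−ψ̃_1) ln((1−ψ̃_1)/(1−ψ_1))) = 0, where θ̃_1 = θ_1(1−θ̃_2)/(1−θ_2). -/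
theorem stmt14 (θ ψ : Fin 3 → ℝ)
    (hθ : ∀ i, 0 < θ i) (hθs : ∑ i, θ i = 1)
    (hψ : ∀ i, 0 < ψ i) (hψs : ∑ i, ψ i = 1)
    (t2 s1 : ℝ) (ht0 : 0 < t2) (ht1 : t2 < 1) (hs0 : 0 < s1) (hs1 : s1 < 1)
    -- proportional covariation: θ₂ varied to t2, ψ₁ varied to s1
    (θt ψt : Fin 3 → ℝ)
    (hθt : θt = fun i => if i = 1 then t2 else θ i * (1 - t2) / (1 - θ 1))
    (hψt : ψt = fun i => if i = 0 then s1 else ψ i * (1 - s1) / (1 - ψ 0))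
    (θb ψb : Fin 3 → ℝ)
    (hθb : ∀ i, 0 < θb i) (hθbs : ∑ i, θb i = 1)
    (hψb : ∀ i, 0 < ψb i) (hψbs : ∑ i, ψb i = 1)
    (hθb2 : θb 1 = t2) (hψb1 : ψb 0 = s1) :
    kl (stagedTree θb ψb) (stagedTree θ ψ) =
        kl (stagedTree θb ψb) (stagedTree θt ψt) +
          kl (stagedTree θt ψt) (stagedTree θ ψ) ↔
      (θb 0 - θ 0 * (1 - t2) / (1 - θ 1)) *
          (s1 * Real.log (s1 / ψ 0) +
            (1 - s1) * Real.log ((1 - s1) / (1 - ψ 0))) = 0 := by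

  rw [Fin.sum_univ_three] at hθs hψs hθbs hψbs
  have p1 := hθ 0; have p2 := hθ 1; have p3 := hθ 2
  have q1 := hψ 0; have q2 := hψ 1; have q3 := hψ 2
  have b1 := hθb 0; have b2 := hθb 1; have b3 := hθb 2
  have c1 := hψb 0; have c2 := hψb 1; have c3 := hψb 2
  have n1 : θ 0 ≠ 0 := ne_of_gt p1
  have n2 : θ 1 ≠ 0 := ne_of_gt p2
  have n3 : θ 2 ≠ 0 := ne_of_gt p3
  have m1 : ψ 0 ≠ 0 := ne_of_gt q1
  have m2 : ψ 1 ≠ 0 := ne_of_gt q2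
  have m3 : ψ 2 ≠ 0 := ne_of_gt q3
  have d1 : θb 0 ≠ 0 := ne_of_gt b1
  have d3 : θb 2 ≠ 0 := ne_of_gt b3
  have e2 : ψb 1 ≠ 0 := ne_of_gt c2
  have e3 : ψb 2 ≠ 0 := ne_of_gt c3
  have nt : t2 ≠ 0 := ne_of_gt ht0
  have ns : s1 ≠ 0 := ne_of_gt hs0
  have nt1 : (1 : ℝ) - t2 ≠ 0 := by linarith
  have ns1 : (1 : ℝ) - s1 ≠ 0 := by linarith
  have nθ1 : (1 : ℝ) - θ 1 ≠ 0 := by linarith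
  have nψ0 : (1 : ℝ) - ψ 0 ≠ 0 := by linarith
  have key : kl (stagedTree θb ψb) (stagedTree θ ψ) -
      (kl (stagedTree θb ψb) (stagedTree θt ψt) +
        kl (stagedTree θt ψt) (stagedTree θ ψ)) =
      (θb 0 - θ 0 * (1 - t2) / (1 - θ 1)) *
          (s1 * Real.log (s1 / ψ 0) +
            (1 - s1) * Real.log ((1 - s1) / (1 - ψ 0))) := by
    subst hθt hψt
    have r1 : θ 2 = 1 - θ 0 - θ 1 := by linarith
    have r2 : ψ 2 = 1 - ψ 0 - ψ 1 := by linarith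
    have r3 : θb 2 = 1 - θb 0 - t2 := by linarith
    have r4 : ψb 2 = 1 - s1 - ψb 1 := by linarith
    simp only [kl, stagedTree, Fin.sum_univ_five, Matrix.cons_val_zero, Matrix.cons_val_one,
      Matrix.head_cons, Matrix.cons_val_two, Matrix.tail_cons, Matrix.cons_val_three,
      Matrix.cons_val_four]
    norm_num
    rw [hθb2, hψb1]
    simp [Real.log_div, Real.log_mul, n1, n2, n3, m1, m2, m3, d1, d3, e2, e3, nt, ns,
      nt1, ns1, nθ1, nψ0, sub_ne_zero]
    rw [r1, r2, r3, r4]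
    field_simp
    ring
  constructor <;> intro h <;> linarith [key]
end

section
/- For proportional covariation of a single block, the I-divergence from the original to the covaried parameter vector has closed form: with θ ∈ Δ_{n−1} strictly positive, index v, p̃ ∈ (0,1), and θ̃ defined by θ̃_v = p̃ and θ̃_j = θ_j(1−p̃)/(1−θ_v) for j ≠ v, it holds that D(θ̃||θ) = p̃ ln(p̃/θ_v) + (1−p̃) ln((1−p̃)/(1−θ_v)). -/
theorem stmt17 {n : ℕ} (θ : Fin n → ℝ) (hθ : ∀ j, 0 < θ j) (hθs : ∑ j, θ j = 1)
    (v : Fin n) (p : ℝ) (hp0 : 0 < p) (hp1 : p < 1)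
    (θt : Fin n → ℝ)
    (hθt : θt = fun j => if j = v then p else θ j * (1 - p) / (1 - θ v)) :
    kl θt θ =
      p * Real.log (p / θ v) + (1 - p) * Real.log ((1 - p) / (1 - θ v)) := by
  subst hθt
  have hadd := Finset.add_sum_erase Finset.univ θ (Finset.mem_univ v)
  have hsum : ∑ j ∈ Finset.univ.erase v, θ j = 1 - θ v := by
    rw [hθs] at hadd; linarith
  rw [kl, ← Finset.add_sum_erase Finset.univ _ (Finset.mem_univ v)]
  simp only [if_pos rfl]
  have hrest : ∀ j ∈ Finset.univ.erase v,
      (if j = v then p else θ j * (1 - p) / (1 - θ v)) *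
        Real.log ((if j = v then p else θ j * (1 - p) / (1 - θ v)) / θ j)
      = θ j * ((1 - p) / (1 - θ v) * Real.log ((1 - p) / (1 - θ v))) := by
    intro j hj
    have hjv : j ≠ v := Finset.ne_of_mem_erase hj
    have hθj := (hθ j).ne'
    have hkey : θ j * (1 - p) / (1 - θ v) / θ j = (1 - p) / (1 - θ v) := by
      rw [mul_div_assoc, mul_comm, mul_div_assoc, div_self hθj, mul_one]
    rw [if_neg hjv, hkey, mul_div_assoc]
    ring
  rw [Finset.sum_congr rfl hrest, ← Finset.sum_mul, hsum]
  simp only [if_pos rfl, if_true]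
  rcases eq_or_ne (θ v) 1 with h | h
  · simp [h]
  · have h1 : (1 : ℝ) - θ v ≠ 0 := sub_ne_zero.mpr (Ne.symm h)
    field_simp
end

section
/- In a Naive Bayes model with two ternary features X_1, X_2 that are conditionally independent given a binary class C, i.e., P(c, x_1, x_2) = π_c θ^{(c)}_{x_1} ψ^{(c)}_{x_2}, suppose one feature parameter from each conditional distribution θ^{(c)} (c = 1,2) is varied and the rest covaried proportionally within each conditional distribution; then the resulting distribution P̃ satisfies D(Q||P) = D(Q||P̃) + D(P̃||P) for all model distributions Q agreeing with P̃ on the varied parameters and on π and ψ^{(c)}. -/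
/-- Naive Bayes joint distribution: class prior π and conditional feature
distributions θ, ψ given the class. -/
noncomputable def naiveBayes (π : Fin 2 → ℝ) (θ ψ : Fin 2 → Fin 3 → ℝ) :
    Fin 2 × Fin 3 × Fin 3 → ℝ :=
  fun x => π x.1 * θ x.1 x.2.1 * ψ x.1 x.2.2

open Finset

theorem kl_eq_kl_add_kl_add_sum {Y : Type*} [Fintype Y] (Q R P : Y → ℝ)
    (hR : ∀ y, R y ≠ 0) (hP : ∀ y, P y ≠ 0) :
    kl Q P = kl Q R + kl R P + ∑ y, (Q y - R y) * Real.log (R y / P y) := by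
  simp only [kl, ← sum_add_distrib]
  refine sum_congr rfl fun y _ => ?_
  by_cases hQ : Q y = 0
  · simp [hQ]
  · have hsplit : Q y / P y = Q y / R y * (R y / P y) := by
      field_simp [hR y, hP y]
    rw [hsplit, Real.log_mul (div_ne_zero hQ (hR y)) (div_ne_zero (hR y) (hP y))]
    ring

section Covary

variable {ι : Type*} [DecidableEq ι]

noncomputable def covaryProportionally (θ : ι → ℝ) (i₀ : ι) (t : ℝ) : ι → ℝ :=
  fun i => if i = i₀ then t else θ i * (1 - t) / (1 - θ i₀)

variable {θ : ι → ℝ} {i₀ : ι} {t : ℝ}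

@[simp]
theorem covaryProportionally_self : covaryProportionally θ i₀ t i₀ = t :=
  if_pos rfl

theorem covaryProportionally_of_ne {i : ι} (hi : i ≠ i₀) :
    covaryProportionally θ i₀ t i = θ i * (1 - t) / (1 - θ i₀) :=
  if_neg hi

theorem covaryProportionally_pos (hθ : ∀ i, 0 < θ i) (hθ₀ : θ i₀ < 1) (ht₀ : 0 < t)
    (ht₁ : t < 1) (i : ι) : 0 < covaryProportionally θ i₀ t i := by
  by_cases hi : i = i₀
  · rw [hi, covaryProportionally_self]
    exact ht₀
  · rw [covaryProportionally_of_ne hi]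
    have := hθ i
    have : 0 < 1 - t := sub_pos.2 ht₁
    have : 0 < 1 - θ i₀ := sub_pos.2 hθ₀
    positivity

theorem log_covaryProportionally_div_of_ne {i : ι} (hi : i ≠ i₀) (hθi : θ i ≠ 0) :
    Real.log (covaryProportionally θ i₀ t i / θ i) = Real.log ((1 - t) / (1 - θ i₀)) := by
  rw [covaryProportionally_of_ne hi, mul_div_assoc, mul_div_cancel_left₀ _ hθi]

variable [Fintype ι]

theorem sum_compl_singleton_eq_one_sub {f : ι → ℝ} (hf : ∑ i, f i = 1) :
    ∑ i ∈ {i₀}ᶜ, f i = 1 - f i₀ := by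
  rw [← hf, Fintype.sum_eq_add_sum_compl i₀]
  ring

theorem sum_covaryProportionally (hθ : ∑ i, θ i = 1) (hθ₀ : θ i₀ ≠ 1) :
    ∑ i, covaryProportionally θ i₀ t i = 1 := by
  have hne : 1 - θ i₀ ≠ 0 := sub_ne_zero.2 hθ₀.symm
  rw [Fintype.sum_eq_add_sum_compl i₀, covaryProportionally_self,
    sum_congr rfl fun i hi => covaryProportionally_of_ne (by simpa using hi), ← sum_div,
    ← sum_mul, sum_compl_singleton_eq_one_sub hθ]
  field_simp
  ring

theorem sum_sub_covaryProportionally_mul_log_eq_zero {θ' : ι → ℝ} (hθ : ∀ i, θ i ≠ 0)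
    (hθs : ∑ i, θ i = 1) (hθ₀ : θ i₀ ≠ 1) (hθ's : ∑ i, θ' i = 1) (hθ'₀ : θ' i₀ = t) :
    ∑ i, (θ' i - covaryProportionally θ i₀ t i) * Real.log (covaryProportionally θ i₀ t i / θ i)
      = 0 := by
  rw [Fintype.sum_eq_add_sum_compl i₀, covaryProportionally_self, hθ'₀, sub_self, zero_mul,
    zero_add, sum_congr rfl fun i hi => by
      rw [log_covaryProportionally_div_of_ne (by simpa using hi) (hθ i)],
    ← sum_mul, sum_sub_distrib, sum_compl_singleton_eq_one_sub hθ's,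
    sum_compl_singleton_eq_one_sub (sum_covaryProportionally hθs hθ₀), covaryProportionally_self, hθ'₀,
    sub_self, zero_mul]

end Covary

section NaiveBayes

variable {π : Fin 2 → ℝ} {ψ : Fin 2 → Fin 3 → ℝ}

theorem naiveBayes_pos {θ : Fin 2 → Fin 3 → ℝ} (hπ : ∀ c, 0 < π c) (hθ : ∀ c i, 0 < θ c i)
    (hψ : ∀ c i, 0 < ψ c i) (x : Fin 2 × Fin 3 × Fin 3) : 0 < naiveBayes π θ ψ x :=
  mul_pos (mul_pos (hπ _) (hθ _ _)) (hψ _ _)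

theorem sum_naiveBayes_sub_mul_log_eq_zero {θ₁ θ₂ θ₃ : Fin 2 → Fin 3 → ℝ}
    (hπ : ∀ c, π c ≠ 0) (hψ : ∀ c i, ψ c i ≠ 0)
    (h : ∀ c, ∑ i, (θ₁ c i - θ₂ c i) * Real.log (θ₂ c i / θ₃ c i) = 0) :
    ∑ x, (naiveBayes π θ₁ ψ x - naiveBayes π θ₂ ψ x) *
      Real.log (naiveBayes π θ₂ ψ x / naiveBayes π θ₃ ψ x) = 0 := by
  have hterm : ∀ c i j, (naiveBayes π θ₁ ψ (c, i, j) - naiveBayes π θ₂ ψ (c, i, j)) *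
      Real.log (naiveBayes π θ₂ ψ (c, i, j) / naiveBayes π θ₃ ψ (c, i, j))
        = π c * ψ c j * ((θ₁ c i - θ₂ c i) * Real.log (θ₂ c i / θ₃ c i)) := by
    intro c i j
    simp only [naiveBayes]
    rw [mul_div_mul_right _ _ (hψ c j), mul_div_mul_left _ _ (hπ c)]
    ring
  simp only [Fintype.sum_prod_type, hterm, ← sum_mul, ← mul_sum, h, mul_zero, sum_const_zero]

end NaiveBayes

theorem stmt18_general (π : Fin 2 → ℝ) (θ ψ : Fin 2 → Fin 3 → ℝ)
    (hπ : ∀ c, 0 < π c)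
    (hθ : ∀ c i, 0 < θ c i) (hθs : ∀ c, ∑ i, θ c i = 1)
    (hψ : ∀ c i, 0 < ψ c i)
    -- one parameter from each conditional distribution θ^{(c)} is varied to t c
    (t : Fin 2 → ℝ) (ht0 : ∀ c, 0 < t c) (ht1 : ∀ c, t c < 1)
    (θt : Fin 2 → Fin 3 → ℝ)
    (hθt : θt = fun c i => if i = 0 then t c else θ c i * (1 - t c) / (1 - θ c 0)) :
    ∀ θb : Fin 2 → Fin 3 → ℝ,
      (∀ c i, 0 < θb c i) → (∀ c, ∑ i, θb c i = 1) → (∀ c, θb c 0 = t c) →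
      kl (naiveBayes π θb ψ) (naiveBayes π θ ψ) =
        kl (naiveBayes π θb ψ) (naiveBayes π θt ψ) +
          kl (naiveBayes π θt ψ) (naiveBayes π θ ψ) := by
  intro θb _ hθbs hθb0
  obtain rfl : θt = fun c => covaryProportionally (θ c) 0 (t c) := hθt
  have hθ0 : ∀ c, θ c 0 < 1 := fun c =>
    hθs c ▸ single_lt_sum (by decide : (1 : Fin 3) ≠ 0) (mem_univ _) (mem_univ _) (hθ c 1)
      fun k _ _ => (hθ c k).le
  have hθtpos : ∀ c i, 0 < covaryProportionally (θ c) 0 (t c) i := fun c =>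
    covaryProportionally_pos (hθ c) (hθ0 c) (ht0 c) (ht1 c)
  rw [kl_eq_kl_add_kl_add_sum _ _ _ (fun x => (naiveBayes_pos hπ hθtpos hψ x).ne')
      (fun x => (naiveBayes_pos hπ hθ hψ x).ne'),
    sum_naiveBayes_sub_mul_log_eq_zero (fun c => (hπ c).ne') (fun c i => (hψ c i).ne')
      fun c => sum_sub_covaryProportionally_mul_log_eq_zero (fun i => (hθ c i).ne') (hθs c)
        (hθ0 c).ne (hθbs c) (hθb0 c),
    add_zero]

theorem stmt18 (π : Fin 2 → ℝ) (θ ψ : Fin 2 → Fin 3 → ℝ)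
    (hπ : ∀ c, 0 < π c) (hπs : ∑ c, π c = 1)
    (hθ : ∀ c i, 0 < θ c i) (hθs : ∀ c, ∑ i, θ c i = 1)
    (hψ : ∀ c i, 0 < ψ c i) (hψs : ∀ c, ∑ i, ψ c i = 1)
    -- one parameter from each conditional distribution θ^{(c)} is varied to t c
    (t : Fin 2 → ℝ) (ht0 : ∀ c, 0 < t c) (ht1 : ∀ c, t c < 1)
    (θt : Fin 2 → Fin 3 → ℝ)
    (hθt : θt = fun c i => if i = 0 then t c else θ c i * (1 - t c) / (1 - θ c 0)) :
    ∀ θb : Fin 2 → Fin 3 → ℝ,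
      (∀ c i, 0 < θb c i) → (∀ c, ∑ i, θb c i = 1) → (∀ c, θb c 0 = t c) →
      kl (naiveBayes π θb ψ) (naiveBayes π θ ψ) =
        kl (naiveBayes π θb ψ) (naiveBayes π θt ψ) +
          kl (naiveBayes π θt ψ) (naiveBayes π θ ψ) :=
  stmt18_general π θ ψ hπ hθ hθs hψ t ht0 ht1 θt hθt
end
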